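/- arXiv:1207.4319 — 2 statements merged into one kernel-verified Lean document; each statement's English description precedes it below -/
import Mathlib

section
/- Let ε, γ ∈ ℝ with |ε| < 1, and let x : ℝ → ℝ be twice differentiable and satisfy ẍ(t) + (1 + ε cos t)·x(t)³ + γ·ẋ(t) = 0 for all t ∈ ℝ. Assume that 2γ(1 + ε cos t) ≥ ε sin t for all t ∈ ℝ. Then every solution is bounded in the future: for all t ≥ 0, x(t)⁴ ≤ 4·V(0) and ẋ(t)² ≤ 2(1 + |ε|)·V(0), where V(0) = ẋ(0)²/(2(1 + ε)) + x(0)⁴/4. -/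
/-!
Along a solution of `ẍ + a(t) x³ + γ ẋ = 0` with `a > 0`, the energy `V = ẋ²/(2a) + x⁴/4`
has derivative `-ẋ² (2γa + ȧ)/(2a²)`. For `a = 1 + ε cos t` the damping condition says
exactly that `2γa + ȧ ≥ 0`, so `V` is nonincreasing, and both bounds follow from `V(t) ≤ V(0)`
together with `a(0) = 1 + ε` and `a(t) ≤ 1 + |ε|`.
-/

open Real

lemma one_add_mul_cos_pos {ε : ℝ} (hε : |ε| < 1) (t : ℝ) : 0 < 1 + ε * cos t := by
  have : |ε * cos t| < 1 := by
    rw [abs_mul]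
    nlinarith [abs_cos_le_one t, abs_nonneg ε, abs_nonneg (cos t)]
  linarith [neg_abs_le (ε * cos t)]

lemma one_add_mul_cos_le (ε t : ℝ) : 1 + ε * cos t ≤ 1 + |ε| := by
  have : |ε * cos t| ≤ |ε| := by
    rw [abs_mul]
    exact mul_le_of_le_one_right (abs_nonneg ε) (abs_cos_le_one t)
  linarith [le_abs_self (ε * cos t)]

noncomputable def cubicEnergy (a x : ℝ → ℝ) (t : ℝ) : ℝ :=
  deriv x t ^ 2 / (2 * a t) + x t ^ 4 / 4

section CubicEnergy

variable {a a' x : ℝ → ℝ} {γ t : ℝ}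

lemma hasDerivAt_cubicEnergy (ha : a t ≠ 0) (ha' : HasDerivAt a (a' t) t)
    (hx : DifferentiableAt ℝ x t) (hx' : DifferentiableAt ℝ (deriv x) t)
    (hode : deriv (deriv x) t + a t * x t ^ 3 + γ * deriv x t = 0) :
    HasDerivAt (cubicEnergy a x)
      (-(deriv x t ^ 2 * (2 * γ * a t + a' t)) / (2 * a t ^ 2)) t := by
  have hkin := (hx'.hasDerivAt.pow 2).div (ha'.const_mul 2) (mul_ne_zero two_ne_zero ha)
  have hpot := hx.hasDerivAt.pow 4 |>.div_const 4
  refine (hkin.add hpot).congr_deriv ?_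
  rw [show deriv (deriv x) t = -(a t * x t ^ 3) - γ * deriv x t by linarith]
  field_simp
  simp only [Pi.pow_apply]
  ring

lemma antitone_cubicEnergy (ha : ∀ t, 0 < a t) (ha' : ∀ t, HasDerivAt a (a' t) t)
    (hx : Differentiable ℝ x) (hx' : Differentiable ℝ (deriv x))
    (hode : ∀ t, deriv (deriv x) t + a t * x t ^ 3 + γ * deriv x t = 0)
    (hdamp : ∀ t, 0 ≤ 2 * γ * a t + a' t) : Antitone (cubicEnergy a x) := by
  have hV t := hasDerivAt_cubicEnergy (ha t).ne' (ha' t) (hx t) (hx' t) (hode t)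
  refine antitone_of_deriv_nonpos (fun t => (hV t).differentiableAt) (fun t => ?_)
  rw [(hV t).deriv, neg_div]
  exact neg_nonpos.mpr (div_nonneg (mul_nonneg (sq_nonneg _) (hdamp t)) (by positivity))

lemma pow_four_le_of_cubicEnergy_le {V : ℝ} (ha : 0 < a t) (hV : cubicEnergy a x t ≤ V) :
    x t ^ 4 ≤ 4 * V := by
  have : 0 ≤ deriv x t ^ 2 / (2 * a t) := by positivity
  unfold cubicEnergy at hV
  linarith

lemma sq_deriv_le_of_cubicEnergy_le {V : ℝ} (ha : 0 < a t) (hV : cubicEnergy a x t ≤ V) :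
    deriv x t ^ 2 ≤ 2 * a t * V := by
  have : deriv x t ^ 2 / (2 * a t) ≤ V := by
    unfold cubicEnergy at hV
    linarith [show 0 ≤ x t ^ 4 / 4 by positivity]
  rwa [div_le_iff₀ (by positivity), mul_comm] at this

end CubicEnergy

/-- For the periodically driven cubic oscillator with friction, under the damping
condition `2γ(1 + ε cos t) ≥ ε sin t`, every solution is bounded in the future:
for all `t ≥ 0`, `x(t)⁴ ≤ 4 V(0)` and `ẋ(t)² ≤ 2(1 + |ε|) V(0)`, where
`V(0) = ẋ(0)²/(2(1 + ε)) + x(0)⁴/4`. -/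
theorem cubic_oscillator_bounded_future
    (ε γ : ℝ) (hε : |ε| < 1) (x : ℝ → ℝ)
    (hx : Differentiable ℝ x) (hx' : Differentiable ℝ (deriv x))
    (hode : ∀ t : ℝ,
      deriv (deriv x) t + (1 + ε * Real.cos t) * (x t) ^ 3 + γ * deriv x t = 0)
    (hdamp : ∀ t : ℝ, 2 * γ * (1 + ε * Real.cos t) ≥ ε * Real.sin t)
    (V0 : ℝ) (hV0 : V0 = (deriv x 0) ^ 2 / (2 * (1 + ε)) + (x 0) ^ 4 / 4) :
    ∀ t : ℝ, 0 ≤ t →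
      (x t) ^ 4 ≤ 4 * V0 ∧ (deriv x t) ^ 2 ≤ 2 * (1 + |ε|) * V0 := by
  intro t ht
  set a : ℝ → ℝ := fun s => 1 + ε * cos s
  have ha : ∀ s, 0 < a s := one_add_mul_cos_pos hε
  have ha' : ∀ s, HasDerivAt a (-(ε * sin s)) s := fun s =>
    ((hasDerivAt_cos s).const_mul ε).const_add 1 |>.congr_deriv (mul_neg ε (sin s))
  have hV0' : cubicEnergy a x 0 = V0 := by simp [cubicEnergy, a, hV0]
  have hVt : cubicEnergy a x t ≤ V0 :=
    hV0' ▸ antitone_cubicEnergy ha ha' hx hx' hode (fun s => by linarith [hdamp s]) ht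
  have hV0_nonneg : 0 ≤ V0 := hV0' ▸ by unfold cubicEnergy; have := ha 0; positivity
  refine ⟨pow_four_le_of_cubicEnergy_le (ha t) hVt, ?_⟩
  calc deriv x t ^ 2 ≤ 2 * a t * V0 := sq_deriv_le_of_cubicEnergy_le (ha t) hVt
    _ ≤ 2 * (1 + |ε|) * V0 := by gcongr; exact one_add_mul_cos_le ε t
end

section
/- Let κ, M, M₀, ρ > 0 and ω ∈ ℝ satisfy Kepler's third law ω²·ρ³ = κ·(M + M₀), set ρ_C = M₀·ρ/(M + M₀) (the distance of the centre of the satellite from the centre of mass), and let c ∈ [−1, 1]. Define, for r near 0, the total (gravitational plus centrifugal) potential V(r) = −κ·M₀·(ρ² + r² − 2ρ·r·c)^{−1/2} − (ω²/2)·(ρ_C² + r² − 2ρ_C·r·c). Then V'(0) = 0 (the terms linear in r cancel by Kepler's third law), and V''(0) = −(κ/ρ³)·(3·M₀·c² + M); that is, V(r) = V(0) − (κM/ρ)·(r/ρ)²·((3/2)·(M₀/M)·c² + 1/2) + o(r²). -/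
/-!
Near `r = 0` the gravitational term is `-κM₀` times the inverse of the distance
`√(ρ² + r² - 2ρrc)` to the primary, and the centrifugal term is `-ω²/2` times the squared
distance to the centre of mass, so both are smooth. Differentiating, `V'(0) = -κM₀c/ρ² + ω²ρ_C c`,
which vanishes since Kepler's law gives `ω²ρ_C = κM₀/ρ²`, and `V''(0) = κM₀(1 - 3c²)/ρ³ - ω²`,
which Kepler's law turns into `-(κ/ρ³)(3M₀c² + M)`. The `o(r²)` expansion is the second-order
Taylor formula with Peano remainder, which needs only `V'` near `0` and `V''(0)`: the mean value
inequality bounds the remainder by that of `V'`.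
-/

open Asymptotics Filter Topology

theorem isLittleO_sub_taylor_two {E : Type*} [NormedAddCommGroup E] [NormedSpace ℝ E]
    {f f' : ℝ → E} {x₀ : ℝ} {a : E}
    (hf : ∀ᶠ x in 𝓝 x₀, HasDerivAt f (f' x) x) (hf' : HasDerivAt f' a x₀) :
    (fun x => f x - (f x₀ + (x - x₀) • f' x₀ + ((x - x₀) ^ 2 / 2) • a)) =o[𝓝 x₀]
      fun x => (x - x₀) ^ 2 := by
  obtain ⟨δ, hδ, hball⟩ := Metric.eventually_nhds_iff_ball.mp hf
  have hpoly (x : ℝ) : HasDerivAt (fun x : ℝ => f x₀ + (x - x₀) • f' x₀ + ((x - x₀) ^ 2 / 2) • a)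
      (f' x₀ + (x - x₀) • a) x := by
    have hlin := ((hasDerivAt_id' x).sub_const x₀).smul_const (f' x₀)
    have hquad := ((((hasDerivAt_id' x).sub_const x₀).pow 2).div_const 2).smul_const a
    exact ((hlin.const_add (f x₀)).fun_add hquad).congr_deriv (by simp)
  have hrem : ∀ x ∈ Metric.ball x₀ δ, HasDerivWithinAt
      (fun x => f x - (f x₀ + (x - x₀) • f' x₀ + ((x - x₀) ^ 2 / 2) • a))
      (f' x - f' x₀ - (x - x₀) • a) (Metric.ball x₀ δ) x := fun x hx =>
    (((hball x hx).fun_sub (hpoly x)).congr_deriv (sub_sub _ _ _).symm).hasDerivWithinAt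
  have hrem' : (fun x => f' x - f' x₀ - (x - x₀) • a) =o[𝓝[Metric.ball x₀ δ] x₀]
      fun x => (x - x₀) ^ 1 := by
    simpa using (hasDerivAt_iff_isLittleO.mp hf').mono nhdsWithin_le_nhds
  have := (convex_ball x₀ δ).isLittleO_pow_succ_real (Metric.mem_ball_self hδ) hrem hrem'
  rw [nhdsWithin_eq_nhds.mpr (Metric.ball_mem_nhds x₀ hδ)] at this
  simpa using this

/-- The squared distance from a point at distance `a` from the origin to the point at distance `r`
in a direction making an angle with cosine `c` with it. -/
def cosineLawSq (a c r : ℝ) : ℝ := a ^ 2 + r ^ 2 - 2 * a * r * c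

namespace cosineLawSq

variable (a c : ℝ)

theorem zero : cosineLawSq a c 0 = a ^ 2 := by simp [cosineLawSq]

theorem hasDerivAt (r : ℝ) : HasDerivAt (cosineLawSq a c) (2 * (r - a * c)) r := by
  have := (((hasDerivAt_id' r).pow 2).const_add (a ^ 2)).sub
    (((hasDerivAt_id' r).const_mul (2 * a)).mul_const c)
  exact this.congr_deriv (by simp; ring)

variable {a c}

theorem eventually_pos (ha : a ≠ 0) : ∀ᶠ r in 𝓝 0, 0 < cosineLawSq a c r :=
  continuousAt_const.eventually_lt (hasDerivAt a c 0).continuousAt (by rw [zero]; positivity)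

theorem hasDerivAt_inv_sqrt {r : ℝ} (h : 0 < cosineLawSq a c r) :
    HasDerivAt (fun r => (√(cosineLawSq a c r))⁻¹)
      (-(r - a * c) / (cosineLawSq a c r * √(cosineLawSq a c r))) r := by
  have hsqrt := (hasDerivAt a c r).sqrt h.ne'
  refine (hsqrt.inv (Real.sqrt_pos.mpr h).ne').congr_deriv ?_
  rw [Real.sq_sqrt h.le]
  field_simp

theorem hasDerivAt_inv_sqrt_deriv_zero (ha : 0 < a) :
    HasDerivAt (fun r => -(r - a * c) / (cosineLawSq a c r * √(cosineLawSq a c r)))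
      ((3 * c ^ 2 - 1) / a ^ 3) 0 := by
  have h0 : 0 < cosineLawSq a c 0 := by rw [zero]; positivity
  have hnum := ((hasDerivAt_id' (0 : ℝ)).sub_const (a * c)).fun_neg
  have hden := (hasDerivAt a c 0).fun_mul ((hasDerivAt a c 0).sqrt h0.ne')
  refine (hnum.div hden (mul_pos h0 (Real.sqrt_pos.mpr h0)).ne').congr_deriv ?_
  rw [zero, Real.sqrt_sq ha.le]
  field_simp
  ring

end cosineLawSq

theorem tidal_potential_expansion_general
    (κ M M₀ ρ : ℝ) (hM : 0 < M) (hM₀ : 0 < M₀) (hρ : 0 < ρ)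
    (ω : ℝ) (hKepler : ω ^ 2 * ρ ^ 3 = κ * (M + M₀))
    (ρC : ℝ) (hρC : ρC = M₀ * ρ / (M + M₀))
    (c : ℝ)
    (V : ℝ → ℝ)
    (hV : ∀ r : ℝ,
      V r = -(κ * M₀) / Real.sqrt (ρ ^ 2 + r ^ 2 - 2 * ρ * r * c)
        - (ω ^ 2 / 2) * (ρC ^ 2 + r ^ 2 - 2 * ρC * r * c)) :
    deriv V 0 = 0 ∧
      deriv (deriv V) 0 = -(κ / ρ ^ 3) * (3 * M₀ * c ^ 2 + M) ∧
      (fun r : ℝ =>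
          V r - (V 0 - (κ * M / ρ) * (r / ρ) ^ 2 *
            ((3 / 2) * (M₀ / M) * c ^ 2 + 1 / 2)))
        =o[nhds 0] fun r : ℝ => r ^ 2 := by
  have hω : ω ^ 2 = κ * (M + M₀) / ρ ^ 3 := by
    rw [← hKepler]; field_simp
  have hV_eq : V = fun r =>
      -(κ * M₀) * (√(cosineLawSq ρ c r))⁻¹ - ω ^ 2 / 2 * cosineLawSq ρC c r := by
    funext r; rw [hV r, div_eq_mul_inv]; rfl
  set V' := fun r => -(κ * M₀) * (-(r - ρ * c) / (cosineLawSq ρ c r * √(cosineLawSq ρ c r)))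
    - ω ^ 2 / 2 * (2 * (r - ρC * c))
  have hV' : ∀ᶠ r in 𝓝 0, HasDerivAt V (V' r) r :=
    (cosineLawSq.eventually_pos (c := c) hρ.ne').mono fun r hr => hV_eq ▸
      ((cosineLawSq.hasDerivAt_inv_sqrt hr).const_mul _).sub
        ((cosineLawSq.hasDerivAt ρC c r).const_mul _)
  have hV'' : HasDerivAt V' (-(κ / ρ ^ 3) * (3 * M₀ * c ^ 2 + M)) 0 := by
    refine (((cosineLawSq.hasDerivAt_inv_sqrt_deriv_zero hρ).const_mul _).sub
      ((((hasDerivAt_id' 0).sub_const _).const_mul 2).const_mul _)).congr_deriv ?_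
    rw [hω]; field_simp; ring
  -- at the satellite's centre the centrifugal acceleration balances the primary's attraction
  have hbalance : ω ^ 2 * ρC * ρ ^ 2 = κ * M₀ := by
    rw [hω, hρC]; field_simp
  have hV'0 : V' 0 = 0 := by
    simp only [V', cosineLawSq.zero, Real.sqrt_sq hρ.le]
    field_simp
    linear_combination (ρ * c) * hbalance
  refine ⟨hV'.self_of_nhds.deriv.trans hV'0, ?_, ?_⟩
  · rw [Filter.EventuallyEq.deriv_eq (hV'.mono fun r h => h.deriv), hV''.deriv]
  · have := isLittleO_sub_taylor_two hV' hV''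
    simp only [sub_zero, smul_eq_mul, hV'0, mul_zero, add_zero] at this
    refine this.congr_left fun r => ?_
    field_simp
    ring

/-- In the rotating frame, with Kepler's third law `ω²ρ³ = κ(M + M₀)` and
`ρ_C = M₀ρ/(M + M₀)`, the gravitational-plus-centrifugal potential
`V(r) = −κM₀(ρ² + r² − 2ρrc)^{−1/2} − (ω²/2)(ρ_C² + r² − 2ρ_C r c)`
has `V'(0) = 0`, `V''(0) = −(κ/ρ³)(3M₀c² + M)`, i.e.
`V(r) = V(0) − (κM/ρ)(r/ρ)²((3/2)(M₀/M)c² + 1/2) + o(r²)`. -/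
theorem tidal_potential_expansion
    (κ M M₀ ρ : ℝ) (hκ : 0 < κ) (hM : 0 < M) (hM₀ : 0 < M₀) (hρ : 0 < ρ)
    (ω : ℝ) (hKepler : ω ^ 2 * ρ ^ 3 = κ * (M + M₀))
    (ρC : ℝ) (hρC : ρC = M₀ * ρ / (M + M₀))
    (c : ℝ) (hc : c ∈ Set.Icc (-1 : ℝ) 1)
    (V : ℝ → ℝ)
    (hV : ∀ r : ℝ,
      V r = -(κ * M₀) / Real.sqrt (ρ ^ 2 + r ^ 2 - 2 * ρ * r * c)
        - (ω ^ 2 / 2) * (ρC ^ 2 + r ^ 2 - 2 * ρC * r * c)) :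
    deriv V 0 = 0 ∧
      deriv (deriv V) 0 = -(κ / ρ ^ 3) * (3 * M₀ * c ^ 2 + M) ∧
      (fun r : ℝ =>
          V r - (V 0 - (κ * M / ρ) * (r / ρ) ^ 2 *
            ((3 / 2) * (M₀ / M) * c ^ 2 + 1 / 2)))
        =o[nhds 0] fun r : ℝ => r ^ 2 :=
  tidal_potential_expansion_general κ M M₀ ρ hM hM₀ hρ ω hKepler ρC hρC c V hV
end
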